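/- Let x̄ be the unique solution of the SR-LASSO with data (A, b, λ) ∈ ℝ^{m×n} × ℝ^m × ℝ₊₊, and suppose the intermediate assumption holds at x̄ for (A, b, λ): Ax̄ ≠ b, and with ȳ := (b − Ax̄)/‖Ax̄ − b‖₂ and J := {i : |Aᵢᵀȳ| = λ}, ker A_J = {0} and b ∉ range(A_J). Suppose (A_k, b_k, λ_k) → (A, b, λ) with λ_k > 0, that x̄_k is a solution of the SR-LASSO with data (A_k, b_k, λ_k) for each k, and that x̄_k → x̄. Then for all sufficiently large k, the intermediate assumption holds at x̄_k for the data (A_k, b_k, λ_k), i.e., A_k x̄_k ≠ b_k, and with ȳ_k := (b_k − A_k x̄_k)/‖A_k x̄_k − b_k‖₂ and J_k := {i : |(A_k)ᵢᵀȳ_k| = λ_k}, one has ker (A_k)_{J_k} = {0} and b_k ∉ range((A_k)_{J_k}). -/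
import Mathlib


open Matrix Filter Topology
open scoped BigOperators Classical

noncomputable def l2 {k : ℕ} (x : Fin k → ℝ) : ℝ := Real.sqrt (∑ i, (x i) ^ 2)

noncomputable def l1 {k : ℕ} (x : Fin k → ℝ) : ℝ := ∑ i, |x i|

noncomputable def linf {k : ℕ} (x : Fin k → ℝ) : ℝ := sSup (Set.range fun i => |x i|)

noncomputable def dotp {k : ℕ} (x y : Fin k → ℝ) : ℝ := ∑ i, x i * y i

noncomputable def pinv {m s : ℕ} (M : Matrix (Fin m) (Fin s) ℝ) :
    Matrix (Fin s) (Fin m) ℝ := (Mᵀ * M)⁻¹ * Mᵀ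

/-- The SR-LASSO objective f_{A,b,λ}(x) := ‖Ax − b‖₂ + λ‖x‖₁. -/
noncomputable def srObj {m n : ℕ} (A : Matrix (Fin m) (Fin n) ℝ) (b : Fin m → ℝ)
    (lam : ℝ) (x : Fin n → ℝ) : ℝ := l2 (A.mulVec x - b) + lam * l1 x

/-- x is a solution of the SR-LASSO with data (A, b, λ). -/
def IsSol {m n : ℕ} (A : Matrix (Fin m) (Fin n) ℝ) (b : Fin m → ℝ) (lam : ℝ)
    (x : Fin n → ℝ) : Prop := ∀ w : Fin n → ℝ, srObj A b lam x ≤ srObj A b lam w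

/-- y is feasible for the SR-LASSO dual: ‖Aᵀy‖_∞ ≤ λ and ‖y‖₂ ≤ 1. -/
noncomputable def DualFeas {m n : ℕ} (A : Matrix (Fin m) (Fin n) ℝ) (lam : ℝ)
    (y : Fin m → ℝ) : Prop := linf (Aᵀ.mulVec y) ≤ lam ∧ l2 y ≤ 1

/-- y is a solution of the SR-LASSO dual: it is feasible and maximizes ⟨b, ·⟩
over the feasible set. -/
noncomputable def IsDualSol {m n : ℕ} (A : Matrix (Fin m) (Fin n) ℝ) (b : Fin m → ℝ)
    (lam : ℝ) (y : Fin m → ℝ) : Prop :=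
  DualFeas A lam y ∧ ∀ y' : Fin m → ℝ, DualFeas A lam y' → dotp b y' ≤ dotp b y


private lemma l2_pos_of_ne {k : ℕ} {x : Fin k → ℝ} (hx : x ≠ 0) : 0 < l2 x := by
  obtain ⟨i, hi⟩ := Function.ne_iff.mp hx
  have hi' : x i ≠ 0 := hi
  have hs : (0:ℝ) < ∑ j, (x j) ^ 2 :=
    Finset.sum_pos' (fun j _ => sq_nonneg _) ⟨i, Finset.mem_univ i, by positivity⟩
  exact Real.sqrt_pos.mpr hs

private lemma continuous_l2 {k : ℕ} : Continuous (l2 (k := k)) := by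
  unfold l2
  exact Real.continuous_sqrt.comp (continuous_finset_sum _ fun i _ => (continuous_apply i).pow 2)

private lemma mulVec_bound {m n : ℕ} (M : Matrix (Fin m) (Fin n) ℝ) (u : Fin n → ℝ) :
    ‖M.mulVec u‖ ≤ (∑ i, ∑ j, |M i j|) * ‖u‖ := by
  have hC : (0:ℝ) ≤ ∑ i, ∑ j, |M i j| := by positivity
  rw [pi_norm_le_iff_of_nonneg (by positivity)]
  intro i
  have h1 : ‖M.mulVec u i‖ = |∑ j, M i j * u j| := by
    simp [Matrix.mulVec, dotProduct, Real.norm_eq_abs]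
  rw [h1]
  calc |∑ j, M i j * u j| ≤ ∑ j, |M i j * u j| := Finset.abs_sum_le_sum_abs _ _
    _ ≤ ∑ j, |M i j| * ‖u‖ := by
        refine Finset.sum_le_sum fun j _ => ?_
        rw [abs_mul]
        exact mul_le_mul_of_nonneg_left
          ((Real.norm_eq_abs (u j)) ▸ norm_le_pi_norm u j) (abs_nonneg _)
    _ = (∑ j, |M i j|) * ‖u‖ := by rw [Finset.sum_mul]
    _ ≤ (∑ i, ∑ j, |M i j|) * ‖u‖ := by
        refine mul_le_mul_of_nonneg_right ?_ (norm_nonneg u)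
        exact Finset.single_le_sum (f := fun i => ∑ j, |M i j|)
          (fun i _ => by positivity) (Finset.mem_univ i)

set_option maxHeartbeats 1600000 in
/-- local stability of the intermediate assumption: if the
intermediate assumption holds at the unique solution x̄ for data (A, b, λ),
(Aₖ, bₖ, λₖ) → (A, b, λ), x̄ₖ solves the SR-LASSO for (Aₖ, bₖ, λₖ) and
x̄ₖ → x̄, then for all large k the intermediate assumption holds at x̄ₖ for
(Aₖ, bₖ, λₖ). -/
theorem stmt_13 {m n : ℕ} (A : Matrix (Fin m) (Fin n) ℝ) (b : Fin m → ℝ)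
    (lam : ℝ) (hlam : 0 < lam) (xbar : Fin n → ℝ)
    (hsol : IsSol A b lam xbar)
    (huniq : ∀ x : Fin n → ℝ, IsSol A b lam x → x = xbar)
    (hres : A.mulVec xbar ≠ b)
    (ybar : Fin m → ℝ)
    (hybar : ybar = (l2 (A.mulVec xbar - b))⁻¹ • (b - A.mulVec xbar))
    (hkerJ : ∀ u : Fin n → ℝ,
      (∀ i, |Aᵀ.mulVec ybar i| ≠ lam → u i = 0) → A.mulVec u = 0 → u = 0)
    (hrgeJ : ¬ ∃ u : Fin n → ℝ,
      (∀ i, |Aᵀ.mulVec ybar i| ≠ lam → u i = 0) ∧ A.mulVec u = b)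
    (Ak : ℕ → Matrix (Fin m) (Fin n) ℝ) (bk : ℕ → Fin m → ℝ) (lamk : ℕ → ℝ)
    (hlamk : ∀ k, 0 < lamk k)
    (hAk : Filter.Tendsto Ak Filter.atTop (nhds A))
    (hbk : Filter.Tendsto bk Filter.atTop (nhds b))
    (hlk : Filter.Tendsto lamk Filter.atTop (nhds lam))
    (xk : ℕ → Fin n → ℝ)
    (hxk : ∀ k, IsSol (Ak k) (bk k) (lamk k) (xk k))
    (hxlim : Filter.Tendsto xk Filter.atTop (nhds xbar)) :
    ∀ᶠ k in Filter.atTop,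
      (Ak k).mulVec (xk k) ≠ bk k ∧
      (∀ u : Fin n → ℝ,
        (∀ i, |(Ak k)ᵀ.mulVec ((l2 ((Ak k).mulVec (xk k) - bk k))⁻¹ •
            (bk k - (Ak k).mulVec (xk k))) i| ≠ lamk k → u i = 0) →
        (Ak k).mulVec u = 0 → u = 0) ∧
      ¬ ∃ u : Fin n → ℝ,
        (∀ i, |(Ak k)ᵀ.mulVec ((l2 ((Ak k).mulVec (xk k) - bk k))⁻¹ •
            (bk k - (Ak k).mulVec (xk k))) i| ≠ lamk k → u i = 0) ∧
        (Ak k).mulVec u = bk k := by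
  classical
  -- residual at the limit
  have hr : A.mulVec xbar - b ≠ 0 := sub_ne_zero.mpr hres
  have hl2r : 0 < l2 (A.mulVec xbar - b) := l2_pos_of_ne hr
  -- convergence of residuals
  have hpair : Filter.Tendsto (fun k => (Ak k, xk k)) Filter.atTop (nhds (A, xbar)) :=
    hAk.prodMk_nhds hxlim
  have hAx : Filter.Tendsto (fun k => (Ak k).mulVec (xk k)) Filter.atTop
      (nhds (A.mulVec xbar)) :=
    ((Continuous.matrix_mulVec continuous_fst continuous_snd).tendsto (A, xbar)).comp hpair
  have hrk : Filter.Tendsto (fun k => (Ak k).mulVec (xk k) - bk k) Filter.atTop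
      (nhds (A.mulVec xbar - b)) := hAx.sub hbk
  -- convergence of the dual-certificate candidates
  have hyk : Filter.Tendsto
      (fun k => (l2 ((Ak k).mulVec (xk k) - bk k))⁻¹ • (bk k - (Ak k).mulVec (xk k)))
      Filter.atTop (nhds ybar) := by
    rw [hybar]
    exact (((continuous_l2.tendsto _).comp hrk).inv₀ (ne_of_gt hl2r)).smul (hbk.sub hAx)
  have hwt : Filter.Tendsto
      (fun k => (Ak k)ᵀ.mulVec ((l2 ((Ak k).mulVec (xk k) - bk k))⁻¹ •
        (bk k - (Ak k).mulVec (xk k)))) Filter.atTop (nhds (Aᵀ.mulVec ybar)) := by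
    have hAkT : Filter.Tendsto (fun k => (Ak k)ᵀ) Filter.atTop (nhds Aᵀ) :=
      ((Continuous.matrix_transpose continuous_id).tendsto A).comp hAk
    have hpair2 : Filter.Tendsto (fun k => ((Ak k)ᵀ,
        (l2 ((Ak k).mulVec (xk k) - bk k))⁻¹ • (bk k - (Ak k).mulVec (xk k))))
        Filter.atTop (nhds (Aᵀ, ybar)) := hAkT.prodMk_nhds hyk
    exact ((Continuous.matrix_mulVec continuous_fst continuous_snd).tendsto
      (Aᵀ, ybar)).comp hpair2
  -- eventual support containment
  have hsupp : ∀ᶠ k in Filter.atTop, ∀ i, |Aᵀ.mulVec ybar i| ≠ lam →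
      |(Ak k)ᵀ.mulVec ((l2 ((Ak k).mulVec (xk k) - bk k))⁻¹ •
        (bk k - (Ak k).mulVec (xk k))) i| ≠ lamk k := by
    rw [Filter.eventually_all]
    intro i
    by_cases hi : |Aᵀ.mulVec ybar i| = lam
    · exact Filter.Eventually.of_forall fun k h => absurd hi h
    · have ht : Filter.Tendsto (fun k =>
          |(Ak k)ᵀ.mulVec ((l2 ((Ak k).mulVec (xk k) - bk k))⁻¹ •
            (bk k - (Ak k).mulVec (xk k))) i| - lamk k) Filter.atTop
          (nhds (|Aᵀ.mulVec ybar i| - lam)) :=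
        (((continuous_apply i).tendsto _).comp hwt).abs.sub hlk
      filter_upwards [ht.eventually_ne (sub_ne_zero.mpr hi)] with k hk
      exact fun _ => sub_ne_zero.mp hk
  -- the support submodule S
  let S : Submodule ℝ (Fin n → ℝ) :=
    { carrier := {u | ∀ i, |Aᵀ.mulVec ybar i| ≠ lam → u i = 0}
      add_mem' := fun ha hb i hi => by
        simp only [Pi.add_apply, ha i hi, hb i hi, add_zero]
      zero_mem' := fun i _ => rfl
      smul_mem' := fun c u hu i hi => by
        simp only [Pi.smul_apply, hu i hi, smul_zero] }
  have hmemS : ∀ u : Fin n → ℝ, (∀ i, |Aᵀ.mulVec ybar i| ≠ lam → u i = 0) → u ∈ S :=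
    fun u hu => hu
  -- antilipschitz constant for A restricted to S
  have hLker : LinearMap.ker ((Matrix.mulVecLin A).comp S.subtype) = ⊥ := by
    rw [LinearMap.ker_eq_bot']
    intro u hu
    have hu' : A.mulVec (u : Fin n → ℝ) = 0 := by
      simpa [Matrix.mulVecLin_apply] using hu
    exact Subtype.ext (hkerJ (u : Fin n → ℝ) u.2 hu')
  obtain ⟨K, hK0, hKanti⟩ :=
    LinearMap.exists_antilipschitzWith ((Matrix.mulVecLin A).comp S.subtype) hLker
  set Kr : ℝ := max (K : ℝ) 1 with hKr_def
  have hKr1 : (1:ℝ) ≤ Kr := le_max_right _ _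
  have hKr0 : (0:ℝ) < Kr := lt_of_lt_of_le one_pos hKr1
  have hcoer : ∀ u : Fin n → ℝ, u ∈ S → ‖u‖ ≤ Kr * ‖A.mulVec u‖ := by
    intro u hu
    have h1 := hKanti.le_mul_dist (⟨u, hu⟩ : S) 0
    simp only [map_zero, dist_zero_right] at h1
    have h2 : ‖(⟨u, hu⟩ : S)‖ = ‖u‖ := rfl
    have h3 : ((Matrix.mulVecLin A).comp S.subtype) (⟨u, hu⟩ : S) = A.mulVec u := rfl
    rw [h2, h3] at h1
    calc ‖u‖ ≤ (K : ℝ) * ‖A.mulVec u‖ := h1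
      _ ≤ Kr * ‖A.mulVec u‖ :=
        mul_le_mul_of_nonneg_right (le_max_left _ _) (norm_nonneg _)
  -- distance from b to the image of S
  set R : Submodule ℝ (Fin m → ℝ) := S.map (Matrix.mulVecLin A) with hR_def
  have hbR : b ∉ (R : Set (Fin m → ℝ)) := by
    intro hb
    obtain ⟨u, hu, hub⟩ := hb
    exact hrgeJ ⟨u, hu, by simpa [Matrix.mulVecLin_apply] using hub⟩
  obtain ⟨d, hd0, hball⟩ :=
    Metric.isOpen_iff.mp (R.closed_of_finiteDimensional).isOpen_compl b hbR
  have hdist : ∀ v ∈ R, d ≤ ‖v - b‖ := by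
    intro v hv
    by_contra h
    push_neg at h
    exact hball (by rwa [Metric.mem_ball, dist_eq_norm]) hv
  -- entrywise perturbation size
  set ΔA : ℕ → ℝ := fun k => ∑ i, ∑ j, |A i j - Ak k i j| with hΔ_def
  have hΔ0 : ∀ k, 0 ≤ ΔA k := fun k => by positivity
  have hΔlim : Filter.Tendsto ΔA Filter.atTop (nhds 0) := by
    have hAe : ∀ i j, Filter.Tendsto (fun k => Ak k i j) Filter.atTop (nhds (A i j)) := by
      intro i j
      exact (((continuous_apply j).comp (continuous_apply i)).tendsto A).comp hAk
    have h := tendsto_finset_sum (Finset.univ : Finset (Fin m))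
      (fun i _ => tendsto_finset_sum (Finset.univ : Finset (Fin n))
        (fun j _ => (tendsto_const_nhds.sub (hAe i j)).abs))
      (f := fun i k => ∑ j, |A i j - Ak k i j|)
    simpa using h
  have hΔbound : ∀ k (u : Fin n → ℝ), ‖(A - Ak k).mulVec u‖ ≤ ΔA k * ‖u‖ := by
    intro k u
    have := mulVec_bound (A - Ak k) u
    simpa [Matrix.sub_apply] using this
  -- eventual smallness
  set B : ℝ := 2 * Kr * (‖b‖ + 1) with hB_def
  have hB0 : 0 ≤ B := by positivity
  set eps : ℝ := min (1 / (2 * Kr)) (d / (4 * (B + 1))) with heps_def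
  have heps0 : 0 < eps :=
    lt_min (div_pos one_pos (by linarith)) (div_pos hd0 (by linarith))
  have hΔsm : ∀ᶠ k in Filter.atTop, ΔA k < eps := hΔlim.eventually (gt_mem_nhds heps0)
  have hbsm : ∀ᶠ k in Filter.atTop, ‖bk k - b‖ < min 1 (d / 4) := by
    have h := tendsto_iff_norm_sub_tendsto_zero.mp hbk
    exact h.eventually (gt_mem_nhds (lt_min one_pos (by linarith)))
  have hr0 : ∀ᶠ k in Filter.atTop, (Ak k).mulVec (xk k) - bk k ≠ 0 := hrk.eventually_ne hr
  -- combine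
  filter_upwards [hsupp, hΔsm, hbsm, hr0] with k hk_supp hk_Δ hk_b hk_r
  have hKΔ : Kr * ΔA k ≤ 1 / 2 := by
    have h1 : ΔA k ≤ 1 / (2 * Kr) := le_of_lt (lt_of_lt_of_le hk_Δ (min_le_left _ _))
    have h2 : Kr * ΔA k ≤ Kr * (1 / (2 * Kr)) :=
      mul_le_mul_of_nonneg_left h1 hKr0.le
    have h3 : Kr * (1 / (2 * Kr)) = 1 / 2 := by field_simp <;> ring
    linarith
  refine ⟨sub_ne_zero.mp hk_r, ?_, ?_⟩
  · -- kernel condition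
    intro u hu hAu
    have huS : u ∈ S := hmemS u fun i hi => hu i (hk_supp i hi)
    have h1 : ‖u‖ ≤ Kr * ‖A.mulVec u‖ := hcoer u huS
    have h2 : ‖A.mulVec u‖ ≤ ΔA k * ‖u‖ := by
      have he : A.mulVec u = (A - Ak k).mulVec u := by
        rw [Matrix.sub_mulVec, hAu, sub_zero]
      rw [he]; exact hΔbound k u
    have h4 : Kr * ‖A.mulVec u‖ ≤ Kr * (ΔA k * ‖u‖) :=
      mul_le_mul_of_nonneg_left h2 hKr0.le
    have h5 : Kr * (ΔA k * ‖u‖) = (Kr * ΔA k) * ‖u‖ := by ring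
    have h6 : (Kr * ΔA k) * ‖u‖ ≤ (1 / 2) * ‖u‖ :=
      mul_le_mul_of_nonneg_right hKΔ (norm_nonneg u)
    have h7 : ‖u‖ ≤ 0 := by linarith
    have h8 : ‖u‖ = 0 := le_antisymm h7 (norm_nonneg u)
    exact norm_eq_zero.mp h8
  · -- range condition
    rintro ⟨u, hu, hAu⟩
    have huS : u ∈ S := hmemS u fun i hi => hu i (hk_supp i hi)
    have h1 : ‖u‖ ≤ Kr * ‖A.mulVec u‖ := hcoer u huS
    have h2 : ‖A.mulVec u - bk k‖ ≤ ΔA k * ‖u‖ := by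
      have he : A.mulVec u - bk k = (A - Ak k).mulVec u := by
        rw [Matrix.sub_mulVec, hAu]
      rw [he]; exact hΔbound k u
    have h3 : ‖A.mulVec u‖ ≤ ΔA k * ‖u‖ + ‖bk k‖ := by
      have := norm_add_le (A.mulVec u - bk k) (bk k)
      simp only [sub_add_cancel] at this
      linarith
    have hbk1 : ‖bk k‖ ≤ ‖b‖ + 1 := by
      have h := norm_add_le (bk k - b) b
      simp only [sub_add_cancel] at h
      have := lt_of_lt_of_le hk_b (min_le_left _ _)
      linarith
    have h4 : Kr * ‖A.mulVec u‖ ≤ Kr * (ΔA k * ‖u‖ + ‖bk k‖) :=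
      mul_le_mul_of_nonneg_left h3 hKr0.le
    have h5 : Kr * ‖bk k‖ ≤ Kr * (‖b‖ + 1) :=
      mul_le_mul_of_nonneg_left hbk1 hKr0.le
    have h6 : (Kr * ΔA k) * ‖u‖ ≤ (1 / 2) * ‖u‖ :=
      mul_le_mul_of_nonneg_right hKΔ (norm_nonneg u)
    have hBu : ‖u‖ ≤ B := by nlinarith [norm_nonneg u]
    have hAuR : A.mulVec u ∈ R := ⟨u, huS, rfl⟩
    have hd := hdist _ hAuR
    have h7 : ‖A.mulVec u - b‖ ≤ ΔA k * B + ‖bk k - b‖ := by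
      have he : A.mulVec u - b = (A.mulVec u - bk k) + (bk k - b) := by abel
      have h8 := norm_add_le (A.mulVec u - bk k) (bk k - b)
      rw [← he] at h8
      have h9 : ΔA k * ‖u‖ ≤ ΔA k * B := mul_le_mul_of_nonneg_left hBu (hΔ0 k)
      linarith
    have h10 : ΔA k * B ≤ d / 4 := by
      have h11 : ΔA k ≤ d / (4 * (B + 1)) :=
        le_of_lt (lt_of_lt_of_le hk_Δ (min_le_right _ _))
      have h12 : ΔA k * B ≤ (d / (4 * (B + 1))) * B :=
        mul_le_mul_of_nonneg_right h11 hB0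
      have h13 : (d / (4 * (B + 1))) * B ≤ d / 4 := by
        rw [div_mul_eq_mul_div, div_le_div_iff₀ (by linarith) (by norm_num)]
        nlinarith
      linarith
    have h14 := lt_of_lt_of_le hk_b (min_le_right _ _)
    linarith
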